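/- arXiv:0804.4106 — 2 statements merged into one kernel-verified Lean document; each statement's English description precedes it below -/
import Mathlib

section
/- Fix 0 < α < 1 and set f_{β,μ}(z) = (1+β) log(z - α) - (1-β) log(1 - αz) - (μ + 1 + β) log z for real β with |β| < 1 and μ = (2α/(1-α²))(α + √(1-β²)). Then the point z_c(β) = (√(1+β) + α√(1-β)) / (√(1-β) + α√(1+β)) satisfies f'_{β,μ}(z_c) = 0 and f''_{β,μ}(z_c) = 0, i.e., z_c is a double critical point of f_{β,μ}. -/
/-!
Write `s = √(1+β)` and `t = √(1-β)`. Then `1 + β = s²`, `1 - β = t²`, `μ + 1 + β = (s + αt)² / (1 - α²)`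
and `z_c = (s + αt) / (t + αs)`, so that `z_c - α` and `1 - α z_c` are `s (1 - α²) / (t + αs)` and
`t (1 - α²) / (t + αs)`. With these substitutions the three terms of `f'(z_c)` become
`(t + αs) / (1 - α²)` times `s`, `αt` and `-(s + αt)`, and those of `f''(z_c)` become
`(t + αs)² / (1 - α²)²` times `-1`, `α²` and `1 - α²`; both sums vanish.
-/

open Filter Topology Real

noncomputable def logPotential (α a b c : ℝ) (z : ℝ) : ℝ :=
  a * log (z - α) - b * log (1 - α * z) - c * log z

section LogPotential

variable {α a b c z : ℝ}

theorem hasDerivAt_logPotential (h₁ : z - α ≠ 0) (h₂ : 1 - α * z ≠ 0) (h₃ : z ≠ 0) :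
    HasDerivAt (logPotential α a b c) (a / (z - α) + α * b / (1 - α * z) - c / z) z := by
  have hlog₁ : HasDerivAt (fun z => log (z - α)) (1 / (z - α)) z := by
    simpa using ((hasDerivAt_id z).sub_const α).log h₁
  have hlog₂ : HasDerivAt (fun z => log (1 - α * z)) (-α / (1 - α * z)) z := by
    simpa using (((hasDerivAt_id z).const_mul α).const_sub 1).log h₂
  have hlog₃ : HasDerivAt log (1 / z) z := by simpa using hasDerivAt_log h₃
  exact (((hlog₁.const_mul a).sub (hlog₂.const_mul b)).sub (hlog₃.const_mul c)).congr_deriv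
    (by ring)

theorem deriv_logPotential_eventuallyEq (h₁ : z - α ≠ 0) (h₂ : 1 - α * z ≠ 0) (h₃ : z ≠ 0) :
    deriv (logPotential α a b c) =ᶠ[𝓝 z]
      fun w => a / (w - α) + α * b / (1 - α * w) - c / w := by
  have hne₁ : ∀ᶠ w in 𝓝 z, w - α ≠ 0 :=
    (continuous_id.sub continuous_const).continuousAt.eventually_ne h₁
  have hne₂ : ∀ᶠ w in 𝓝 z, 1 - α * w ≠ 0 :=
    (continuous_const.sub (continuous_const.mul continuous_id)).continuousAt.eventually_ne h₂
  filter_upwards [hne₁, hne₂, eventually_ne_nhds h₃] with w hw₁ hw₂ hw₃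
  exact (hasDerivAt_logPotential hw₁ hw₂ hw₃).deriv

theorem deriv_deriv_logPotential (h₁ : z - α ≠ 0) (h₂ : 1 - α * z ≠ 0) (h₃ : z ≠ 0) :
    deriv (deriv (logPotential α a b c)) z =
      -(a / (z - α) ^ 2) + α ^ 2 * b / (1 - α * z) ^ 2 + c / z ^ 2 := by
  rw [(deriv_logPotential_eventuallyEq h₁ h₂ h₃).deriv_eq]
  have hq₁ := (hasDerivAt_const z a).fun_div ((hasDerivAt_id' z).sub_const α) h₁
  have hq₂ := (hasDerivAt_const z (α * b)).fun_div
    (((hasDerivAt_id' z).const_mul α).const_sub 1) h₂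
  have hq₃ := (hasDerivAt_const z c).fun_div (hasDerivAt_id' z) h₃
  have hq : HasDerivAt (fun w => a / (w - α) + α * b / (1 - α * w) - c / w) _ z :=
    (hq₁.add hq₂).sub hq₃
  rw [hq.deriv]
  ring

end LogPotential

theorem logPotential_doubleCritical {α s t : ℝ} (hs : s ≠ 0) (ht : t ≠ 0) (hα : 1 - α ^ 2 ≠ 0)
    (hts : t + α * s ≠ 0) (hst : s + α * t ≠ 0) :
    deriv (logPotential α (s ^ 2) (t ^ 2) ((s + α * t) ^ 2 / (1 - α ^ 2)))
        ((s + α * t) / (t + α * s)) = 0 ∧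
      deriv (deriv (logPotential α (s ^ 2) (t ^ 2) ((s + α * t) ^ 2 / (1 - α ^ 2))))
        ((s + α * t) / (t + α * s)) = 0 := by
  obtain ⟨z, hz⟩ : ∃ z, z = (s + α * t) / (t + α * s) := ⟨_, rfl⟩
  rw [← hz]
  have hz₁ : z - α = s * (1 - α ^ 2) / (t + α * s) := by
    rw [hz, eq_div_iff hts, sub_mul, div_mul_cancel₀ _ hts]; ring
  have hz₂ : 1 - α * z = t * (1 - α ^ 2) / (t + α * s) := by
    rw [hz, eq_div_iff hts, sub_mul, mul_assoc, div_mul_cancel₀ _ hts]; ring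
  have h₁ : z - α ≠ 0 := by rw [hz₁]; positivity
  have h₂ : 1 - α * z ≠ 0 := by rw [hz₂]; positivity
  have h₃ : z ≠ 0 := hz ▸ div_ne_zero hst hts
  refine ⟨?_, ?_⟩
  · rw [(hasDerivAt_logPotential h₁ h₂ h₃).deriv, hz₁, hz₂, hz]
    field_simp
    ring
  · rw [deriv_deriv_logPotential h₁ h₂ h₃, hz₁, hz₂, hz]
    field_simp
    ring

/-- with `f_{β,μ}(z) = (1+β) log(z-α) - (1-β) log(1-αz) - (μ+1+β) log z`,
`μ = (2α/(1-α²))(α + √(1-β²))`, the point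
`z_c(β) = (√(1+β) + α√(1-β)) / (√(1-β) + α√(1+β))` is a double critical point:
`f' (z_c) = 0` and `f'' (z_c) = 0`. -/
theorem double_saddle_point
    (α β : ℝ) (hα : 0 < α) (hα1 : α < 1) (hβ : |β| < 1)
    (μ : ℝ) (hμ : μ = (2 * α / (1 - α ^ 2)) * (α + Real.sqrt (1 - β ^ 2)))
    (f : ℝ → ℝ)
    (hf : ∀ z, f z = (1 + β) * Real.log (z - α) - (1 - β) * Real.log (1 - α * z)
      - (μ + 1 + β) * Real.log z)
    (zc : ℝ)
    (hzc : zc = (Real.sqrt (1 + β) + α * Real.sqrt (1 - β)) /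
      (Real.sqrt (1 - β) + α * Real.sqrt (1 + β))) :
    deriv f zc = 0 ∧ deriv (deriv f) zc = 0 := by
  obtain ⟨hβ₁, hβ₂⟩ := abs_lt.mp hβ
  set s := √(1 + β)
  set t := √(1 - β)
  have hs : 0 < s := sqrt_pos.mpr (by linarith)
  have ht : 0 < t := sqrt_pos.mpr (by linarith)
  have hs2 : s ^ 2 = 1 + β := sq_sqrt (by linarith)
  have ht2 : t ^ 2 = 1 - β := sq_sqrt (by linarith)
  have hα2 : 0 < 1 - α ^ 2 := by nlinarith
  have hμ' : μ + 1 + β = (s + α * t) ^ 2 / (1 - α ^ 2) := by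
    have hst : √(1 - β ^ 2) = s * t := by
      rw [show 1 - β ^ 2 = (1 + β) * (1 - β) by ring, sqrt_mul (by linarith)]
    rw [hμ, hst]
    field_simp
    linear_combination -hs2 - α ^ 2 * ht2
  have hf' : f = logPotential α (s ^ 2) (t ^ 2) ((s + α * t) ^ 2 / (1 - α ^ 2)) := by
    funext z
    rw [hf, hs2, ht2, ← hμ', logPotential]
  subst hzc
  rw [hf']
  exact logPotential_doubleCritical hs.ne' ht.ne' hα2.ne' (by positivity) (by positivity)
end

section
/- With f_{β,μ} and z_c(β) as above (μ = (2α/(1-α²))(α + √(1-β²))), the third derivative at the double critical point satisfies f'''_{β,μ}(z_c(β)) = 2D(β)³/z_c(β)³ for some explicit D(β) > 0; in particular at β = 0 one has z_c(0) = 1 and f'''_{0,μ}(1) = 2D³ with D = α^{1/3}(1+α)^{4/3}/(1-α²). -/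
/-!
Each logarithm `c log (a z + b)` contributes `2 c a³ / (a z + b)³` to `f'''`. Writing
`s = √(1 + β)`, `t = √(1 - β)`, the saddle point `z_c = (s + α t) / (t + α s)` satisfies
`z_c - α = s (1 - α²) / (t + α s)` and `1 - α z_c = t (1 - α²) / (t + α s)`, and with
`s² + t² = 2` the quantity `z_c³ f'''(z_c)` collapses to the perfect square
`2 α (s t (1 + α²) + 2 α)² / (s t (1 - α²)³) > 0`, whose half is `D(β)³`.
At `β = 0` this is `2 α (1 + α)⁴ / (1 - α²)³`.
-/

open Real Filter Topology

theorem iteratedDeriv_succ_log_affine (n : ℕ) {a b x : ℝ} (hx : a * x + b ≠ 0) :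
    iteratedDeriv (n + 1) (fun w => log (a * w + b)) x
      = (-1) ^ n * n.factorial * a ^ (n + 1) * (a * x + b) ^ (-1 - n : ℤ) := by
  have hderiv : deriv (fun w => log (a * w + b)) =ᶠ[𝓝 x] fun w => a * (a * w + b)⁻¹ := by
    have hopen : IsOpen {w : ℝ | a * w + b ≠ 0} :=
      isOpen_ne_fun (by fun_prop) continuous_const
    filter_upwards [hopen.mem_nhds hx] with w hw
    simpa [div_eq_mul_inv] using ((((hasDerivAt_id w).const_mul a).add_const b).log hw).deriv
  rw [iteratedDeriv_succ', hderiv.iteratedDeriv_eq, iteratedDeriv_const_mul_field,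
    iteratedDeriv_eq_iterate, iter_deriv_inv_linear]
  ring

theorem iteratedDeriv_three_const_mul_log_affine (c : ℝ) {a b x : ℝ} (hx : a * x + b ≠ 0) :
    iteratedDeriv 3 (fun w => c * log (a * w + b)) x = 2 * c * a ^ 3 / (a * x + b) ^ 3 := by
  rw [iteratedDeriv_const_mul_field, iteratedDeriv_succ_log_affine 2 hx]
  norm_num
  ring

theorem iteratedDeriv_three_logCombination {α p q r z : ℝ} (h₁ : z - α ≠ 0)
    (h₂ : 1 - α * z ≠ 0) (h₃ : z ≠ 0) :
    iteratedDeriv 3 (fun w => p * log (w - α) - q * log (1 - α * w) - r * log w) z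
      = 2 * p / (z - α) ^ 3 + 2 * q * α ^ 3 / (1 - α * z) ^ 3 - 2 * r / z ^ 3 := by
  have h₁' : 1 * z + -α ≠ 0 := by simpa [sub_eq_add_neg] using h₁
  have h₂' : -α * z + 1 ≠ 0 := by simpa [sub_eq_add_neg, add_comm] using h₂
  have h₃' : 1 * z + 0 ≠ 0 := by simpa using h₃
  have hfun : (fun w => p * log (w - α) - q * log (1 - α * w) - r * log w)
      = fun w => (p * log (1 * w + -α) - q * log (-α * w + 1)) - r * log (1 * w + 0) := by
    funext w; ring_nf
  rw [hfun,
    iteratedDeriv_fun_sub (by fun_prop (disch := assumption)) (by fun_prop (disch := assumption)),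
    iteratedDeriv_fun_sub (by fun_prop (disch := assumption)) (by fun_prop (disch := assumption)),
    iteratedDeriv_three_const_mul_log_affine _ h₁', iteratedDeriv_three_const_mul_log_affine _ h₂',
    iteratedDeriv_three_const_mul_log_affine _ h₃']
  ring

section SaddlePoint

variable {α s t z : ℝ}

theorem sub_saddle_eq (hq : t + α * s ≠ 0) (hz : z = (s + α * t) / (t + α * s)) :
    z - α = s * (1 - α ^ 2) / (t + α * s) := by
  rw [hz, eq_div_iff hq, sub_mul, div_mul_cancel₀ _ hq]; ring

theorem one_sub_mul_saddle_eq (hq : t + α * s ≠ 0) (hz : z = (s + α * t) / (t + α * s)) :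
    1 - α * z = t * (1 - α ^ 2) / (t + α * s) := by
  rw [hz]; field_simp; ring

theorem saddle_third_deriv_identity (hα : 0 ≤ α) (hα1 : α < 1) (hs : 0 < s) (ht : 0 < t)
    (hst : s ^ 2 + t ^ 2 = 2) (hz : z = (s + α * t) / (t + α * s)) :
    (2 * s ^ 2 / (z - α) ^ 3 + 2 * t ^ 2 * α ^ 3 / (1 - α * z) ^ 3
        - 2 * (2 * α / (1 - α ^ 2) * (α + s * t) + s ^ 2) / z ^ 3) * z ^ 3
      = 2 * (α * (s * t * (1 + α ^ 2) + 2 * α) ^ 2 / (s * t * (1 - α ^ 2) ^ 3)) := by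
  have hk : 0 < 1 - α ^ 2 := by nlinarith
  have hq : 0 < t + α * s := by positivity
  have hsquare : (t + α ^ 3 * s) * (s + α * t) ^ 3
      - s * t * (1 - α ^ 2) ^ 2 * (2 * α * (α + s * t) + s ^ 2 * (1 - α ^ 2))
      = α * (s * t * (1 + α ^ 2) + 2 * α) ^ 2 := by
    linear_combination (3 * α ^ 2 * s * t + 2 * α ^ 3 + α ^ 3 * t ^ 2 + α ^ 3 * s ^ 2
      + α ^ 6 * s * t) * hst
  rw [sub_saddle_eq hq.ne' hz, one_sub_mul_saddle_eq hq.ne' hz, hz, ← hsquare]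
  field_simp

end SaddlePoint

theorem saddle_pos {α β : ℝ} (hα : 0 ≤ α) (hβ : |β| < 1) :
    0 < (√(1 + β) + α * √(1 - β)) / (√(1 - β) + α * √(1 + β)) := by
  obtain ⟨hβl, hβr⟩ := abs_lt.mp hβ
  have hs : 0 < √(1 + β) := sqrt_pos.mpr (by linarith)
  have ht : 0 < √(1 - β) := sqrt_pos.mpr (by linarith)
  positivity

theorem iteratedDeriv_three_mul_pow_three_at_saddle {α β z : ℝ} (hα : 0 < α) (hα1 : α < 1)
    (hβ : |β| < 1)
    (hz : z = (√(1 + β) + α * √(1 - β)) / (√(1 - β) + α * √(1 + β))) :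
    iteratedDeriv 3 (fun w => (1 + β) * log (w - α) - (1 - β) * log (1 - α * w)
        - (2 * α / (1 - α ^ 2) * (α + √(1 - β ^ 2)) + 1 + β) * log w) z * z ^ 3
      = 2 * (α * (√(1 - β ^ 2) * (1 + α ^ 2) + 2 * α) ^ 2
          / (√(1 - β ^ 2) * (1 - α ^ 2) ^ 3)) := by
  obtain ⟨hβl, hβr⟩ := abs_lt.mp hβ
  have hs : 0 < √(1 + β) := sqrt_pos.mpr (by linarith)
  have ht : 0 < √(1 - β) := sqrt_pos.mpr (by linarith)
  have hs2 : √(1 + β) ^ 2 = 1 + β := sq_sqrt (by linarith)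
  have ht2 : √(1 - β) ^ 2 = 1 - β := sq_sqrt (by linarith)
  have hst : √(1 - β ^ 2) = √(1 + β) * √(1 - β) := by
    rw [← sqrt_mul (by linarith)]; ring_nf
  have hk : 0 < 1 - α ^ 2 := by nlinarith
  have hq : 0 < √(1 - β) + α * √(1 + β) := by positivity
  have hzα : z - α ≠ 0 := by rw [sub_saddle_eq hq.ne' hz]; positivity
  have hαz : 1 - α * z ≠ 0 := by rw [one_sub_mul_saddle_eq hq.ne' hz]; positivity
  have hz0 : z ≠ 0 := hz ▸ (saddle_pos hα.le hβ).ne'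
  rw [iteratedDeriv_three_logCombination hzα hαz hz0, hst]
  convert saddle_third_deriv_identity hα.le hα1 hs ht (by rw [hs2, ht2]; ring) hz using 4 <;>
    simp only [hs2, ht2, add_assoc]

theorem rpow_div_three_pow_three {x : ℝ} (hx : 0 ≤ x) (y : ℝ) : (x ^ (y / 3)) ^ 3 = x ^ y := by
  rw [← rpow_natCast, ← rpow_mul hx]; norm_num

/-- with `f_{β,μ}` and the double critical point `z_c(β)` as in the
saddle-point analysis, the third derivative satisfies
`f'''(z_c(β)) = 2 D(β)³ / z_c(β)³` for some `D(β) > 0`; in particular at `β = 0` one has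
`z_c(0) = 1` and `f'''(1) = 2D³` with `D = α^{1/3} (1+α)^{4/3} / (1-α²)`. -/
theorem third_derivative_at_double_saddle
    (α : ℝ) (hα : 0 < α) (hα1 : α < 1)
    (μ : ℝ → ℝ) (hμ : ∀ β, μ β = (2 * α / (1 - α ^ 2)) * (α + Real.sqrt (1 - β ^ 2)))
    (f : ℝ → ℝ → ℝ)
    (hf : ∀ β z, f β z = (1 + β) * Real.log (z - α)
      - (1 - β) * Real.log (1 - α * z) - (μ β + 1 + β) * Real.log z)
    (zc : ℝ → ℝ)
    (hzc : ∀ β, zc β = (Real.sqrt (1 + β) + α * Real.sqrt (1 - β)) /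
      (Real.sqrt (1 - β) + α * Real.sqrt (1 + β))) :
    (∀ β : ℝ, |β| < 1 →
      ∃ D : ℝ, 0 < D ∧ iteratedDeriv 3 (f β) (zc β) = 2 * D ^ 3 / (zc β) ^ 3) ∧
    zc 0 = 1 ∧
    iteratedDeriv 3 (f 0) 1 =
      2 * (α ^ ((1 : ℝ) / 3) * (1 + α) ^ ((4 : ℝ) / 3) / (1 - α ^ 2)) ^ 3 := by
  have hk : 0 < 1 - α ^ 2 := by nlinarith
  have hf' : ∀ β, f β = fun w => (1 + β) * log (w - α) - (1 - β) * log (1 - α * w)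
      - (2 * α / (1 - α ^ 2) * (α + √(1 - β ^ 2)) + 1 + β) * log w :=
    fun β => funext fun w => by rw [hf, hμ]
  have hzc0 : zc 0 = 1 := by
    rw [hzc]; norm_num; positivity
  refine ⟨fun β hβ => ?_, hzc0, ?_⟩
  · have key := iteratedDeriv_three_mul_pow_three_at_saddle hα hα1 hβ (hzc β)
    rw [← hf'] at key
    have hz : 0 < zc β := hzc β ▸ saddle_pos hα.le hβ
    have hsqrt : 0 < √(1 - β ^ 2) :=
      sqrt_pos.mpr (sub_pos.mpr ((sq_lt_one_iff_abs_lt_one β).mpr hβ))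
    refine ⟨(α * (√(1 - β ^ 2) * (1 + α ^ 2) + 2 * α) ^ 2
      / (√(1 - β ^ 2) * (1 - α ^ 2) ^ 3)) ^ ((3 : ℕ)⁻¹ : ℝ), by positivity, ?_⟩
    rw [rpow_inv_natCast_pow (by positivity) three_ne_zero, ← key]
    field_simp
  · have key := iteratedDeriv_three_mul_pow_three_at_saddle (β := 0) hα hα1 (by norm_num)
      (hzc0 ▸ hzc 0)
    rw [← hf', one_pow, mul_one] at key
    rw [key, div_pow, mul_pow, rpow_div_three_pow_three hα.le,
      rpow_div_three_pow_three (by positivity)]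
    norm_num
    ring
end
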